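/- In the scaled one-step NormalHedge setting, if the average potential satisfies Ψ = (1/N)·Σ_{i=1}^N Φ(R_i) < 2.32, then after one update the average potential Ψ' = (1/N)·Σ_{i=1}^N Φ(R'_i) satisfies Ψ' − Ψ < (2/3)·α. -/

import Mathlib

/-!
Φ' is monotone and, on `(-∞, M]` with `M ≥ 0`, Lipschitz with constant
`(1/4 + M²/16)·exp(M²/8)` (the second derivative of `exp(x²/8)` at `M`), so each coordinate obeys
a second-order Taylor bound `Φ(R'ᵢ) ≤ Φ(Rᵢ) + Φ'(Rᵢ)(R'ᵢ - Rᵢ) + ⋯`. Writing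
`R'ᵢ - Rᵢ = (gᵢ - g_A) - αRᵢ`, the terms `Φ'(Rᵢ)(gᵢ - g_A)` sum to zero because the weights are
proportional to `Φ'(Rᵢ)`, and the discount contributes `-αRᵢ²/4·exp(Rᵢ²/8)`. The bound `Ψ < 2.32`
gives `Rᵢ² < 8 log(2.32 N)`, hence `αRᵢ² < 1/100`, which keeps the step `R'ᵢ - Rᵢ` of order `√α`;
then the discount term beats the second-order term up to `(13/20)·α`, uniformly in `Rᵢ`.
-/

open Finset

/-- The NormalHedge potential function: `Φ(x) = exp(x²/8)` for `x > 0`, `1` for `x ≤ 0`. -/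
noncomputable def Phi (x : ℝ) : ℝ := if 0 < x then Real.exp (x ^ 2 / 8) else 1

/-- Derivative of the potential: `Φ'(x) = (x/4)·exp(x²/8)` for `x > 0`, `0` for `x ≤ 0`. -/
noncomputable def Phi' (x : ℝ) : ℝ := if 0 < x then (x / 4) * Real.exp (x ^ 2 / 8) else 0

open Real

lemma image_le_tangent_add_sq_of_deriv_sub_le {f f' : ℝ → ℝ} {K M x y : ℝ}
    (hf : ∀ t, HasDerivAt f (f' t) t)
    (hf' : ∀ s t, s ≤ t → t ≤ M → f' t - f' s ≤ K * (t - s)) (hx : x ≤ M) (hy : y ≤ M) :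
    f y ≤ f x + f' x * (y - x) + K / 2 * (y - x) ^ 2 := by
  have hh : ∀ t, HasDerivAt (fun t => f t - f' x * (t - x) - K / 2 * (t - x) ^ 2)
      (f' t - f' x - K * (t - x)) t := fun t => by
    refine (((hf t).sub (((hasDerivAt_id' t).sub_const x).const_mul (f' x))).sub
      ((((hasDerivAt_id' t).sub_const x).fun_pow 2).const_mul (K / 2))).congr_deriv ?_
    push_cast
    ring
  have hcont : Continuous fun t => f t - f' x * (t - x) - K / 2 * (t - x) ^ 2 :=
    continuous_iff_continuousAt.2 fun t => (hh t).continuousAt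
  suffices f y - f' x * (y - x) - K / 2 * (y - x) ^ 2 ≤ f x - f' x * (x - x) - K / 2 * (x - x) ^ 2
    by linarith
  rcases le_total x y with hxy | hyx
  · refine antitoneOn_of_hasDerivWithinAt_nonpos (convex_Icc x y) hcont.continuousOn
      (fun t _ => (hh t).hasDerivWithinAt) (fun t ht => ?_) ⟨le_rfl, hxy⟩ ⟨hxy, le_rfl⟩ hxy
    rw [interior_Icc] at ht
    linarith [hf' x t ht.1.le (ht.2.le.trans hy)]
  · refine monotoneOn_of_hasDerivWithinAt_nonneg (convex_Icc y x) hcont.continuousOn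
      (fun t _ => (hh t).hasDerivWithinAt) (fun t ht => ?_) ⟨le_rfl, hyx⟩ ⟨hyx, le_rfl⟩ hyx
    rw [interior_Icc] at ht
    linarith [hf' t x ht.2.le hx]

lemma exp_mul_mul_sub_le {a b c u : ℝ} (ha : 0 ≤ a) (hab : a * c ≤ b) (hu : 0 ≤ u) :
    exp (c * u) * (a - b * u) ≤ a := by
  have hexp : exp (c * u) * (1 - c * u) ≤ 1 := by
    calc exp (c * u) * (1 - c * u) ≤ exp (c * u) * exp (-(c * u)) := by
          gcongr; linarith [add_one_le_exp (-(c * u))]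
      _ = 1 := by rw [← exp_add, add_neg_cancel, exp_zero]
  calc exp (c * u) * (a - b * u) ≤ exp (c * u) * (a * (1 - c * u)) := by
        gcongr; nlinarith
    _ = a * (exp (c * u) * (1 - c * u)) := by ring
    _ ≤ a := mul_le_of_le_one_right ha hexp

lemma Phi_of_nonpos {x : ℝ} (hx : x ≤ 0) : Phi x = 1 := if_neg hx.not_gt

lemma Phi'_of_nonpos {x : ℝ} (hx : x ≤ 0) : Phi' x = 0 := if_neg hx.not_gt

lemma Phi_pos (x : ℝ) : 0 < Phi x := by
  unfold Phi; split_ifs <;> positivity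

lemma Phi_of_nonneg {x : ℝ} (hx : 0 ≤ x) : Phi x = exp (x ^ 2 / 8) := by
  rcases hx.lt_or_eq with hx | rfl
  · exact if_pos hx
  · simp [Phi]

lemma Phi'_eq_max (x : ℝ) : Phi' x = max x 0 / 4 * exp (max x 0 ^ 2 / 8) := by
  rcases le_or_gt x 0 with hx | hx
  · simp [Phi'_of_nonpos hx, max_eq_right hx]
  · simp [Phi', hx, max_eq_left hx.le]

lemma Phi'_nonneg (x : ℝ) : 0 ≤ Phi' x := by
  rw [Phi'_eq_max]; positivity

lemma hasDerivAt_exp_sq_div_eight (t : ℝ) :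
    HasDerivAt (fun t => exp (t ^ 2 / 8)) (t / 4 * exp (t ^ 2 / 8)) t := by
  convert ((hasDerivAt_pow 2 t).div_const 8).exp using 1
  ring

lemma hasDerivAt_div_four_mul_exp_sq_div_eight (t : ℝ) :
    HasDerivAt (fun t => t / 4 * exp (t ^ 2 / 8)) ((1 / 4 + t ^ 2 / 16) * exp (t ^ 2 / 8)) t := by
  refine (((hasDerivAt_id' t).div_const 4).mul (hasDerivAt_exp_sq_div_eight t)).congr_deriv ?_
  ring

lemma hasDerivAt_Phi (x : ℝ) : HasDerivAt Phi (Phi' x) x := by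
  rcases lt_trichotomy x 0 with hx | rfl | hx
  · rw [Phi'_of_nonpos hx.le]
    exact (hasDerivAt_const x 1).congr_of_eventuallyEq
      (Filter.eventually_of_mem (Iio_mem_nhds hx) fun t ht => Phi_of_nonpos (le_of_lt ht))
  · rw [Phi'_of_nonpos le_rfl, ← hasDerivWithinAt_univ, ← Set.Iic_union_Ici]
    refine ((hasDerivWithinAt_const (0 : ℝ) (Set.Iic 0) (1 : ℝ)).congr
      (fun t ht => Phi_of_nonpos ht) (Phi_of_nonpos le_rfl)).union ?_
    convert ((hasDerivAt_exp_sq_div_eight 0).hasDerivWithinAt (s := Set.Ici 0)).congr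
      (fun t ht => Phi_of_nonneg ht) (Phi_of_nonneg le_rfl) using 1
    simp
  · rw [show Phi' x = x / 4 * exp (x ^ 2 / 8) from if_pos hx]
    exact (hasDerivAt_exp_sq_div_eight x).congr_of_eventuallyEq
      (Filter.eventually_of_mem (Ioi_mem_nhds hx) fun t ht => Phi_of_nonneg (le_of_lt ht))

lemma Phi_mono : Monotone Phi :=
  monotone_of_hasDerivAt_nonneg hasDerivAt_Phi Phi'_nonneg

lemma Phi'_sub_le {M s t : ℝ} (hM : 0 ≤ M) (hst : s ≤ t) (htM : t ≤ M) :
    Phi' t - Phi' s ≤ (1 / 4 + M ^ 2 / 16) * exp (M ^ 2 / 8) * (t - s) := by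
  have hF := hasDerivAt_div_four_mul_exp_sq_div_eight
  have hderiv_le : ∀ c ∈ interior (Set.Icc 0 M),
      deriv (fun t => t / 4 * exp (t ^ 2 / 8)) c ≤ (1 / 4 + M ^ 2 / 16) * exp (M ^ 2 / 8) := by
    intro c hc
    rw [interior_Icc] at hc
    rw [(hF c).deriv]
    have : c ^ 2 ≤ M ^ 2 := pow_le_pow_left₀ hc.1.le hc.2.le 2
    gcongr
  have hmvt := (convex_Icc 0 M).image_sub_le_mul_sub_of_deriv_le
    (fun c _ => (hF c).continuousAt.continuousWithinAt)
    (fun c _ => (hF c).differentiableAt.differentiableWithinAt)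
    hderiv_le (max s 0) ⟨le_max_right _ _, max_le (hst.trans htM) hM⟩
    (max t 0) ⟨le_max_right _ _, max_le htM hM⟩ (max_le_max_right 0 hst)
  have hmax : max t 0 - max s 0 ≤ t - s := by
    simp only [max_def]; split_ifs <;> linarith
  rw [Phi'_eq_max, Phi'_eq_max]
  exact hmvt.trans (by gcongr)

lemma Phi_le_tangent_add_sq {M x y : ℝ} (hM : 0 ≤ M) (hx : x ≤ M) (hy : y ≤ M) :
    Phi y ≤ Phi x + Phi' x * (y - x) + (1 / 4 + M ^ 2 / 16) * exp (M ^ 2 / 8) / 2 * (y - x) ^ 2 :=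
  image_le_tangent_add_sq_of_deriv_sub_le hasDerivAt_Phi
    (fun _ _ hst htM => Phi'_sub_le hM hst htM) hx hy

lemma Phi_step_le_of_nonpos {α R d : ℝ} (hα0 : 0 ≤ α) (hα : α ≤ 1 / 552)
    (hd : |d| ≤ 2 * √α) (hR : R ≤ 0) :
    Phi ((1 - α) * R + d) ≤ Phi R + Phi' R * d + 13 / 20 * α := by
  rw [Phi_of_nonpos hR, Phi'_of_nonpos hR]
  have hy : (1 - α) * R + d ≤ 2 * √α := by
    nlinarith [(abs_le.1 hd).2]
  have hexp : exp (α / 2) ≤ 1 / (1 - α / 2) :=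
    exp_bound_div_one_sub_of_interval (by positivity) (by linarith)
  have hinv : 1 / (1 - α / 2) ≤ 1 + 13 / 20 * α := by
    rw [div_le_iff₀ (by linarith)]
    nlinarith
  calc Phi ((1 - α) * R + d) ≤ Phi (2 * √α) := Phi_mono hy
    _ = exp (α / 2) := by
      rw [Phi_of_nonneg (by positivity), mul_pow, sq_sqrt hα0]
      ring_nf
    _ ≤ 1 + 0 * d + 13 / 20 * α := by linarith

lemma Phi_step_le_of_pos {α R d : ℝ} (hα0 : 0 ≤ α) (hα : α ≤ 1 / 552)
    (hd : |d| ≤ 2 * √α) (hR : 0 < R) (hαR : α * R ^ 2 ≤ 1 / 100) :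
    Phi ((1 - α) * R + d) ≤ Phi R + Phi' R * d + 13 / 20 * α := by
  set s := √α
  have hs0 : 0 ≤ s := sqrt_nonneg α
  have hs2 : s ^ 2 = α := sq_sqrt hα0
  have hsR : s * R ≤ 1 / 10 := by
    nlinarith [mul_pow s R 2, mul_nonneg hs0 hR.le]
  set δ := (1 - α) * R + d - R with hδ_def
  have hδ : |δ| ≤ 21 / 10 * s := by
    have hαR : α * R = s * (s * R) := by rw [← hs2]; ring
    rw [abs_le]
    constructor <;> nlinarith [abs_le.1 hd, mul_nonneg hs0 (mul_nonneg hs0 hR.le)]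
  have hδ2 : δ ^ 2 ≤ 441 / 100 * α := by
    rw [← hs2, ← sq_abs]
    nlinarith [abs_nonneg δ]
  set M := R + 21 / 10 * s with hM_def
  have hM2 : M ^ 2 ≤ R ^ 2 + 43 / 100 := by
    have : M ^ 2 = R ^ 2 + 21 / 5 * (s * R) + 441 / 100 * s ^ 2 := by ring
    linarith
  set E := exp (R ^ 2 / 8) with hE
  have hexpM : exp (M ^ 2 / 8) ≤ 800 / 757 * E := by
    calc exp (M ^ 2 / 8) ≤ exp (43 / 800) * E := by
          rw [← exp_add]; gcongr; linarith
      _ ≤ 1 / (1 - 43 / 800) * E := by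
          gcongr; exact exp_bound_div_one_sub_of_interval (by norm_num) (by norm_num)
      _ = 800 / 757 * E := by norm_num
  have htaylor := Phi_le_tangent_add_sq (x := R) (y := (1 - α) * R + d) (M := M)
    (by positivity) (by linarith [hM_def]) (by linarith [hδ_def, (abs_le.1 hδ).2])
  have hrem : (1 / 4 + M ^ 2 / 16) * exp (M ^ 2 / 8) / 2 * δ ^ 2
      ≤ (1 / 4 + (R ^ 2 + 43 / 100) / 16) * (800 / 757 * E) / 2 * (441 / 100 * α) := by
    gcongr
  -- By `hexpM` and `hδ2`, the second-order term minus the discount `α R² E / 4` is at most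
  -- `α E (a - b R²)` with the `a`, `b` below.
  have hnum : E * (195363 / 302800 - 79 / 757 * R ^ 2) ≤ 195363 / 302800 := by
    have := exp_mul_mul_sub_le (a := 195363 / 302800) (b := 79 / 757) (c := 1 / 8)
      (by norm_num) (by norm_num) (sq_nonneg R)
    rwa [one_div_mul_eq_div, ← hE] at this
  rw [Phi_of_nonneg hR.le, ← hE, show Phi' R = R / 4 * E from if_pos hR] at htaylor ⊢
  calc Phi ((1 - α) * R + d)
      ≤ E + R / 4 * E * δ + (1 / 4 + M ^ 2 / 16) * exp (M ^ 2 / 8) / 2 * δ ^ 2 := htaylor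
    _ ≤ E + R / 4 * E * d + α * (E * (195363 / 302800 - 79 / 757 * R ^ 2)) := by
      have : δ = d - α * R := by ring
      rw [this] at hrem ⊢
      nlinarith
    _ ≤ E + R / 4 * E * d + 13 / 20 * α := by nlinarith

lemma Phi_step_le {α R d : ℝ} (hα0 : 0 ≤ α) (hα : α ≤ 1 / 552) (hd : |d| ≤ 2 * √α)
    (hR : 0 < R → α * R ^ 2 ≤ 1 / 100) :
    Phi ((1 - α) * R + d) ≤ Phi R + Phi' R * d + 13 / 20 * α := by
  rcases le_or_gt R 0 with hR0 | hR0
  · exact Phi_step_le_of_nonpos hα0 hα hd hR0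
  · exact Phi_step_le_of_pos hα0 hα hd hR0 (hR hR0)

lemma sum_Phi_step_le {ι : Type*} [Fintype ι] {α : ℝ} {R d : ι → ℝ} (hα0 : 0 ≤ α)
    (hα : α ≤ 1 / 552) (hd : ∀ i, |d i| ≤ 2 * √α) (hR : ∀ i, 0 < R i → α * R i ^ 2 ≤ 1 / 100)
    (hcancel : ∑ i, Phi' (R i) * d i = 0) :
    ∑ i, Phi ((1 - α) * R i + d i) ≤ ∑ i, Phi (R i) + Fintype.card ι * (13 / 20 * α) := by
  calc ∑ i, Phi ((1 - α) * R i + d i)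
      ≤ ∑ i, (Phi (R i) + Phi' (R i) * d i + 13 / 20 * α) :=
        sum_le_sum fun i _ => Phi_step_le hα0 hα (hd i) (hR i)
    _ = ∑ i, Phi (R i) + Fintype.card ι * (13 / 20 * α) := by
        rw [sum_add_distrib, sum_add_distrib, hcancel, sum_const, card_univ, nsmul_eq_mul,
          add_zero]

lemma le_one_div_552_of_lt_one_div_log {α c : ℝ} (hc : 2 ≤ c) (hα : α < 1 / (800 * log c)) :
    α ≤ 1 / 552 := by
  have hlog : 0.69 < log c := by
    linarith [log_two_gt_d9, log_le_log (by norm_num) hc]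
  rw [lt_div_iff₀ (by positivity)] at hα
  nlinarith

lemma mul_sq_le_of_Phi_lt {α c R : ℝ} (hα0 : 0 ≤ α) (hα : α < 1 / (800 * log c)) (hR : 0 < R)
    (hPhi : Phi R < c) : α * R ^ 2 ≤ 1 / 100 := by
  rw [Phi_of_nonneg hR.le] at hPhi
  have hlog : R ^ 2 / 8 < log c := (lt_log_iff_exp_lt (by linarith [exp_pos (R ^ 2 / 8)])).2 hPhi
  have hαc : α * (800 * log c) ≤ 1 := by
    rw [lt_div_iff₀ (by nlinarith)] at hα
    linarith
  nlinarith

section NormalizedWeights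

variable {ι : Type*} [Fintype ι] {w : ι → ℝ}

noncomputable def normalizedWeights (w : ι → ℝ) (i : ι) : ℝ :=
  if 0 < ∑ k, w k then w i / ∑ k, w k else 1 / Fintype.card ι

lemma normalizedWeights_nonneg (hw : ∀ i, 0 ≤ w i) (i : ι) : 0 ≤ normalizedWeights w i := by
  unfold normalizedWeights
  split_ifs with h
  · exact div_nonneg (hw i) h.le
  · positivity

lemma sum_normalizedWeights [Nonempty ι] (w : ι → ℝ) : ∑ i, normalizedWeights w i = 1 := by
  unfold normalizedWeights
  split_ifs with h
  · rw [← sum_div, div_self h.ne']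
  · rw [sum_const, card_univ, nsmul_eq_mul, mul_one_div_cancel]
    exact_mod_cast Fintype.card_ne_zero

lemma abs_sum_normalizedWeights_mul_le [Nonempty ι] (hw : ∀ i, 0 ≤ w i) {g : ι → ℝ} {c : ℝ}
    (hg : ∀ i, |g i| ≤ c) : |∑ i, normalizedWeights w i * g i| ≤ c := by
  calc |∑ i, normalizedWeights w i * g i| ≤ ∑ i, normalizedWeights w i * c := by
        refine (abs_sum_le_sum_abs _ _).trans (sum_le_sum fun i _ => ?_)
        rw [abs_mul, abs_of_nonneg (normalizedWeights_nonneg hw i)]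
        exact mul_le_mul_of_nonneg_left (hg i) (normalizedWeights_nonneg hw i)
    _ = c := by rw [← sum_mul, sum_normalizedWeights, one_mul]

lemma sum_mul_sub_sum_normalizedWeights_mul (hw : ∀ i, 0 ≤ w i) (g : ι → ℝ) :
    ∑ i, w i * (g i - ∑ j, normalizedWeights w j * g j) = 0 := by
  simp only [mul_sub, sum_sub_distrib, ← sum_mul]
  rcases (sum_nonneg fun i _ => hw i).lt_or_eq with h | h
  · have hp : ∀ i, normalizedWeights w i = w i / ∑ k, w k := fun i => if_pos h
    simp only [hp, div_mul_eq_mul_div, ← sum_div]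
    field_simp
    ring
  · have hw0 : ∀ i, w i = 0 := fun i =>
      (sum_eq_zero_iff_of_nonneg fun j _ => hw j).1 h.symm i (mem_univ i)
    simp [hw0]

end NormalizedWeights

theorem normalHedge_average_potential_step

    (N : ℕ)
    (α : ℝ) (hα0 : 0 < α) (hα : α < 1 / (800 * Real.log (2.32 * N)))
    (R g : Fin N → ℝ) (hg : ∀ i, |g i| ≤ Real.sqrt α)
    (p : Fin N → ℝ)
    (hp : ∀ i, p i =
      if 0 < ∑ k, Phi' (R k) then Phi' (R i) / ∑ k, Phi' (R k) else 1 / N)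
    (gA : ℝ) (hgA : gA = ∑ i, p i * g i)
    (R' : Fin N → ℝ) (hR' : ∀ i, R' i = (1 - α) * R i + g i - gA)
    (hΨ : (1 / (N : ℝ)) * ∑ i, Phi (R i) < 2.32) :
    (1 / (N : ℝ)) * ∑ i, Phi (R' i) - (1 / (N : ℝ)) * ∑ i, Phi (R i) < (2 / 3) * α := by
  have hN : (1 : ℝ) ≤ N := by
    rcases N.eq_zero_or_pos with rfl | hN
    · simp only [CharP.cast_eq_zero, mul_zero, log_zero, div_zero] at hα
      linarith
    · exact_mod_cast hN
  have : Nonempty (Fin N) := ⟨⟨0, by exact_mod_cast hN⟩⟩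
  have hα552 := le_one_div_552_of_lt_one_div_log (by linarith) hα
  have hPhiR : ∀ i, Phi (R i) < 2.32 * N := fun i => by
    have := single_le_sum (fun k _ => (Phi_pos (R k)).le) (mem_univ i)
    rw [one_div_mul_eq_div, div_lt_iff₀ (by positivity)] at hΨ
    linarith
  obtain rfl : p = normalizedWeights fun k => Phi' (R k) := funext fun i => by
    simp [hp, normalizedWeights]
  have hgA' : |gA| ≤ √α := hgA ▸ abs_sum_normalizedWeights_mul_le (fun k => Phi'_nonneg _) hg
  have hstep := sum_Phi_step_le (d := fun i => g i - gA) hα0.le hα552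
    (fun i => (abs_sub _ _).trans (by linarith [hg i]))
    (fun i hRi => mul_sq_le_of_Phi_lt hα0.le hα hRi (hPhiR i))
    (hgA ▸ sum_mul_sub_sum_normalizedWeights_mul (fun k => Phi'_nonneg _) g)
  simp only [Fintype.card_fin, ← add_sub_assoc, ← hR'] at hstep
  rw [← mul_sub, one_div_mul_eq_div, div_lt_iff₀ (by positivity)]
  nlinarith
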